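/- arXiv:2605.02961 — 5 statements merged into one kernel-verified Lean document; each statement's English description precedes it below -/
import Mathlib

section
/- Fix d ≥ 1, a real κ > 0, real d×d matrices β (symmetric) and σ, a vector ν ∈ ℝ^d, and a fixed vector y ∈ ℝ^d. Suppose that on an open time interval I, differentiable matrix-valued functions A_t (symmetric for each t), B_t, C_t, vector-valued functions θx_t, θy_t, and a scalar function ζ_t satisfy the ODE system: A'_t = κ·A_t·A_t − (σᵀ·A_t + A_t·σ) − β; B'_t = κ·A_t·B_t − σᵀ·B_t; C'_t = κ·B_tᵀ·B_t; θx'_t = (κ·A_t − σᵀ)·θx_t − β·ν; θy'_t = −κ·B_tᵀ·θx_t; ζ'_t = (κ/2)·tr(A_t) + (1/2)·⟨ν, β·ν⟩ − (κ/2)·‖θx_t‖². Then the function G(t,x) := exp(−(1/2)⟨x, A_t·x⟩ + ⟨x, B_t·y⟩ − (1/2)⟨y, C_t·y⟩ + ⟨θx_t, x⟩ + ⟨θy_t, y⟩ + ζ_t) satisfies the backward linear PDE −∂_t G(t,x) + V(x)·G(t,x) = ⟨σ·x, ∇_x G(t,x)⟩ + (κ/2)·Δ_x G(t,x) for all t ∈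 I and all x ∈ ℝ^d, where V(x) = (1/2)⟨x − ν, β·(x − ν)⟩. -/
/-!
Write `G = exp φ` with the quadratic exponent
`φ(t,x) = -½⟨x, Aₜx⟩ + ⟨Bₜy + θxₜ, x⟩ + kₜ`. Then `∇G = G ∇φ` and `ΔG = G (Δφ + ‖∇φ‖²)`, so the
backward PDE for `G` is equivalent to the Hamilton–Jacobi equation
`-∂ₜφ + V = ⟨σx, ∇φ⟩ + (κ/2)(Δφ + ‖∇φ‖²)`, where `∇φ = Bₜy + θxₜ - Aₜx` and `Δφ = -tr Aₜ`.
Both sides are quadratic polynomials in `x`, and the ODE system says exactly that their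
coefficients agree.
-/

open scoped RealInnerProductSpace

/-- Spatial Laplacian: sum of second partial derivatives in the coordinate directions. -/
noncomputable def spatialLaplacian {d : ℕ} (f : EuclideanSpace ℝ (Fin d) → ℝ)
    (x : EuclideanSpace ℝ (Fin d)) : ℝ :=
  ∑ i, fderiv ℝ (fun y => fderiv ℝ f y (EuclideanSpace.single i 1)) x (EuclideanSpace.single i 1)

/-- Matrix-vector multiplication, viewed as acting on Euclidean space. -/
def mvE {d : ℕ} (M : Matrix (Fin d) (Fin d) ℝ) (v : EuclideanSpace ℝ (Fin d)) :
    EuclideanSpace ℝ (Fin d) := WithLp.toLp 2 (M.mulVec v)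

open scoped Matrix

section MatrixVector

variable {d : ℕ} (M N : Matrix (Fin d) (Fin d) ℝ) (u v : EuclideanSpace ℝ (Fin d))

theorem mvE_eq_toEuclideanCLM : mvE M v = Matrix.toEuclideanCLM (𝕜 := ℝ) M v := rfl

theorem add_mvE : mvE (M + N) v = mvE M v + mvE N v := by
  rw [mvE_eq_toEuclideanCLM, map_add]; rfl

theorem sub_mvE : mvE (M - N) v = mvE M v - mvE N v := by
  rw [mvE_eq_toEuclideanCLM, map_sub]; rfl

theorem smul_mvE (r : ℝ) : mvE (r • M) v = r • mvE M v := by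
  rw [mvE_eq_toEuclideanCLM, map_smul]; rfl

theorem mul_mvE : mvE (M * N) v = mvE M (mvE N v) := by
  rw [mvE_eq_toEuclideanCLM, map_mul]; rfl

theorem mvE_sub : mvE M (u - v) = mvE M u - mvE M v :=
  (Matrix.toEuclideanCLM (𝕜 := ℝ) M).map_sub u v

theorem inner_mvE_transpose_right : ⟪u, mvE Mᵀ v⟫ = ⟪mvE M u, v⟫ := by
  rw [mvE_eq_toEuclideanCLM, ← Matrix.conjTranspose_eq_transpose_of_trivial,
    ← Matrix.star_eq_conjTranspose, map_star, ContinuousLinearMap.star_eq_adjoint,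
    ContinuousLinearMap.adjoint_inner_right]
  rfl

theorem inner_mvE_transpose_left : ⟪mvE Mᵀ u, v⟫ = ⟪u, mvE M v⟫ := by
  rw [real_inner_comm, inner_mvE_transpose_right, real_inner_comm]

variable {M}

theorem Matrix.IsSymm.inner_mvE_comm (hM : M.IsSymm) : ⟪u, mvE M v⟫ = ⟪mvE M u, v⟫ := by
  rw [← inner_mvE_transpose_right, hM.eq]

theorem Matrix.IsSymm.isSelfAdjoint_toEuclideanCLM (hM : M.IsSymm) :
    IsSelfAdjoint (Matrix.toEuclideanCLM (𝕜 := ℝ) M) :=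
  IsSelfAdjoint.map (Matrix.isHermitian_iff_isSymm.mpr hM) _

end MatrixVector

section InnerProductSpace

variable {E : Type*} [NormedAddCommGroup E] [InnerProductSpace ℝ E]

theorem HasDerivAt.inner_const {f : ℝ → E} {f' : E} {t : ℝ} (h : HasDerivAt f f' t) (w : E) :
    HasDerivAt (fun s => ⟪f s, w⟫) ⟪f', w⟫ t := by
  simpa using h.inner ℝ (hasDerivAt_const t w)

theorem contDiff_quadratic (T : E →L[ℝ] E) (c : E) (k : ℝ) {n : WithTop ℕ∞} :
    ContDiff ℝ n (fun v => -(1 / 2) * ⟪v, T v⟫ + ⟪c, v⟫ + k) := by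
  have hq : ContDiff ℝ n fun v => ⟪v, T v⟫ := contDiff_id.inner ℝ T.contDiff
  have hl : ContDiff ℝ n fun v => ⟪c, v⟫ := contDiff_const.inner ℝ contDiff_id
  fun_prop

theorem hasGradientAt_quadratic [CompleteSpace E] {T : E →L[ℝ] E} (hT : IsSelfAdjoint T)
    (c : E) (k : ℝ) (x : E) :
    HasGradientAt (fun v => -(1 / 2) * ⟪v, T v⟫ + ⟪c, v⟫ + k) (c - T x) x := by
  have hq := ((hasFDerivAt_id x).inner ℝ T.hasFDerivAt).const_mul (-(1 / 2) : ℝ)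
  refine hasGradientAt_iff_hasFDerivAt.mpr
    (((hq.add (innerSL ℝ c).hasFDerivAt).add_const k).congr_fderiv ?_)
  ext v
  have hsymm : ⟪x, T v⟫ = ⟪T x, v⟫ := (hT.isSymmetric x v).symm
  simp only [one_div, id_eq, neg_smul, add_apply, neg_apply, smul_apply,
    ContinuousLinearMap.comp_apply, ContinuousLinearMap.prod_apply, ContinuousLinearMap.id_apply,
    fderivInnerCLM_apply, hsymm, real_inner_comm v, smul_eq_mul, coe_innerSL_apply, map_sub,
    sub_apply, InnerProductSpace.toDual_apply_apply]
  ring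

theorem HasGradientAt.exp [CompleteSpace E] {φ : E → ℝ} {g x : E} (h : HasGradientAt φ g x) :
    HasGradientAt (fun v => Real.exp (φ v)) (Real.exp (φ x) • g) x := by
  rw [hasGradientAt_iff_hasFDerivAt, map_smul]
  exact h.hasFDerivAt.exp

end InnerProductSpace

variable {d : ℕ}

theorem hasDerivAt_inner_mvE {A : ℝ → Matrix (Fin d) (Fin d) ℝ} {A' : Matrix (Fin d) (Fin d) ℝ}
    {t : ℝ} (h : ∀ i j, HasDerivAt (fun s => A s i j) (A' i j) t)
    (u v : EuclideanSpace ℝ (Fin d)) :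
    HasDerivAt (fun s => ⟪u, mvE (A s) v⟫) ⟪u, mvE A' v⟫ t := by
  simp only [mvE, PiLp.inner_apply, Matrix.mulVec, dotProduct, RCLike.inner_apply, conj_trivial]
  exact HasDerivAt.fun_sum fun i _ =>
    (HasDerivAt.fun_sum fun j _ => (h i j).mul_const (v j)).mul_const (u i)

theorem spatialLaplacian_exp_comp {φ : EuclideanSpace ℝ (Fin d) → ℝ} (hφ : ContDiff ℝ 2 φ)
    (x : EuclideanSpace ℝ (Fin d)) :
    spatialLaplacian (fun v => Real.exp (φ v)) x
      = Real.exp (φ x) * (spatialLaplacian φ x + ‖gradient φ x‖ ^ 2) := by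
  have hφd : Differentiable ℝ φ := hφ.differentiable (by norm_num)
  have hdφ : ∀ e, Differentiable ℝ fun z => fderiv ℝ φ z e := fun e =>
    ((hφ.fderiv_right (m := 1) (by norm_num)).differentiable one_ne_zero).clm_apply
      (differentiable_const e)
  have hfirst : ∀ e, (fun z => fderiv ℝ (fun v => Real.exp (φ v)) z e)
      = fun z => Real.exp (φ z) * fderiv ℝ φ z e := fun e => funext fun z => by
    rw [(hφd z).hasFDerivAt.exp.fderiv]; rfl
  have hsecond : ∀ e, fderiv ℝ (fun z => fderiv ℝ (fun v => Real.exp (φ v)) z e) x e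
      = Real.exp (φ x) * (fderiv ℝ (fun z => fderiv ℝ φ z e) x e + fderiv ℝ φ x e ^ 2) := by
    intro e
    rw [hfirst, ((hφd x).hasFDerivAt.exp.fun_mul (hdφ e x).hasFDerivAt).fderiv]
    simp only [add_apply, smul_apply, smul_eq_mul]
    ring
  have hcoord : ∀ i, fderiv ℝ φ x (EuclideanSpace.single i 1) = gradient φ x i := fun i => by
    rw [(hφd x).hasGradientAt.fderiv_apply, EuclideanSpace.inner_single_right]; simp
  simp only [spatialLaplacian, hsecond, hcoord, ← Finset.mul_sum, Finset.sum_add_distrib,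
    EuclideanSpace.real_norm_sq_eq]

theorem inner_mvE_single_single (M : Matrix (Fin d) (Fin d) ℝ) (i : Fin d) :
    ⟪mvE M (EuclideanSpace.single i 1), EuclideanSpace.single i 1⟫ = M i i := by
  simp [EuclideanSpace.inner_single_right, mvE]

theorem spatialLaplacian_quadratic {M : Matrix (Fin d) (Fin d) ℝ} (hM : M.IsSymm)
    (c : EuclideanSpace ℝ (Fin d)) (k : ℝ) (x : EuclideanSpace ℝ (Fin d)) :
    spatialLaplacian (fun v => -(1 / 2) * ⟪v, mvE M v⟫ + ⟪c, v⟫ + k) x = -M.trace := by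
  set T := Matrix.toEuclideanCLM (𝕜 := ℝ) M
  have hfirst : ∀ e, (fun z => fderiv ℝ (fun v => -(1 / 2) * ⟪v, mvE M v⟫ + ⟪c, v⟫ + k) z e)
      = fun z => ⟪c - T z, e⟫ := fun e => funext fun z =>
    (hasGradientAt_quadratic hM.isSelfAdjoint_toEuclideanCLM c k z).fderiv_apply
  have hsecond : ∀ e, fderiv ℝ (fun z => ⟪c - T z, e⟫) x e = -⟪T e, e⟫ := fun e => by
    rw [(((hasFDerivAt_const c x).fun_sub T.hasFDerivAt).inner ℝ (hasFDerivAt_const e x)).fderiv]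
    simp [fderivInnerCLM_apply]
  simp only [spatialLaplacian, hfirst, hsecond, Finset.sum_neg_distrib, Matrix.trace]
  exact congrArg _ (Finset.sum_congr rfl fun i _ => inner_mvE_single_single M i)

theorem exp_solves_backward_pde_of_hamiltonJacobi {φ : ℝ → EuclideanSpace ℝ (Fin d) → ℝ}
    {t φ' κ V : ℝ} {x b : EuclideanSpace ℝ (Fin d)} (hφ : ContDiff ℝ 2 (φ t))
    (hφt : HasDerivAt (fun s => φ s x) φ' t)
    (hHJ : -φ' + V = ⟪b, gradient (φ t) x⟫
      + κ / 2 * (spatialLaplacian (φ t) x + ‖gradient (φ t) x‖ ^ 2)) :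
    -deriv (fun s => Real.exp (φ s x)) t + V * Real.exp (φ t x)
      = ⟪b, gradient (fun v => Real.exp (φ t v)) x⟫
        + κ / 2 * spatialLaplacian (fun v => Real.exp (φ t v)) x := by
  rw [hφt.exp.deriv, ((hφ.differentiable (by norm_num) x).hasGradientAt.exp).gradient,
    spatialLaplacian_exp_comp hφ, real_inner_smul_right]
  linear_combination Real.exp (φ t x) * hHJ

theorem hamiltonJacobi_of_riccati (κ : ℝ) {β A : Matrix (Fin d) (Fin d) ℝ}
    (σ B : Matrix (Fin d) (Fin d) ℝ) (hβ : β.IsSymm) (hA : A.IsSymm)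
    (ν x y θ : EuclideanSpace ℝ (Fin d)) :
    -(-(1 / 2) * ⟪x, mvE (κ • (A * A) - (σᵀ * A + A * σ) - β) x⟫
        + ⟪x, mvE (κ • (A * B) - σᵀ * B) y⟫ - 1 / 2 * ⟪y, mvE (κ • (Bᵀ * B)) y⟫
        + ⟪mvE (κ • A - σᵀ) θ - mvE β ν, x⟫ + ⟪-(κ • mvE Bᵀ θ), y⟫
        + (κ / 2 * A.trace + 1 / 2 * ⟪ν, mvE β ν⟫ - κ / 2 * ‖θ‖ ^ 2))
      + 1 / 2 * ⟪x - ν, mvE β (x - ν)⟫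
      = ⟪mvE σ x, mvE B y + θ - mvE A x⟫
        + κ / 2 * (-A.trace + ‖mvE B y + θ - mvE A x‖ ^ 2) := by
  -- Oriented instances of symmetry, pinned at `x`: the unrestricted rule would make `simp` loop.
  have hA₁ : ∀ w, ⟪x, mvE A w⟫ = ⟪mvE A x, w⟫ := fun w => hA.inner_mvE_comm x w
  have hA₂ : ∀ w, ⟪mvE A w, x⟫ = ⟪w, mvE A x⟫ := fun w => (hA.inner_mvE_comm w x).symm
  have hβ₁ : ∀ w, ⟪w, mvE β x⟫ = ⟪mvE β w, x⟫ := fun w => hβ.inner_mvE_comm w x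
  simp only [sub_mvE, add_mvE, smul_mvE, mul_mvE, mvE_sub, inner_sub_left, inner_sub_right,
    inner_add_left, inner_add_right, inner_neg_left, real_inner_smul_left, real_inner_smul_right,
    inner_mvE_transpose_left, inner_mvE_transpose_right, ← real_inner_self_eq_norm_sq,
    hA₁, hA₂, hβ₁]
  simp only [real_inner_comm]
  ring

theorem gaussian_ansatz_solves_backward_pde_general
    (d : ℕ) (κ : ℝ)
    (β σ : Matrix (Fin d) (Fin d) ℝ) (hβ : β.IsSymm)
    (ν y : EuclideanSpace ℝ (Fin d))
    (I : Set ℝ)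
    (A B C : ℝ → Matrix (Fin d) (Fin d) ℝ)
    (θx θy : ℝ → EuclideanSpace ℝ (Fin d))
    (ζ : ℝ → ℝ)
    (hAsymm : ∀ t ∈ I, (A t).IsSymm)
    (hA : ∀ t ∈ I, ∀ i j, HasDerivAt (fun s => A s i j)
      ((κ • (A t * A t) - (σ.transpose * A t + A t * σ) - β) i j) t)
    (hB : ∀ t ∈ I, ∀ i j, HasDerivAt (fun s => B s i j)
      ((κ • (A t * B t) - σ.transpose * B t) i j) t)
    (hC : ∀ t ∈ I, ∀ i j, HasDerivAt (fun s => C s i j)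
      ((κ • ((B t).transpose * B t)) i j) t)
    (hθx : ∀ t ∈ I, HasDerivAt θx (mvE (κ • A t - σ.transpose) (θx t) - mvE β ν) t)
    (hθy : ∀ t ∈ I, HasDerivAt θy (-(κ • mvE (B t).transpose (θx t))) t)
    (hζ : ∀ t ∈ I, HasDerivAt ζ
      (κ / 2 * (A t).trace + 1 / 2 * ⟪ν, mvE β ν⟫ - κ / 2 * ‖θx t‖ ^ 2) t)
    (V : EuclideanSpace ℝ (Fin d) → ℝ)
    (hV : V = fun x => 1 / 2 * ⟪x - ν, mvE β (x - ν)⟫)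
    (G : ℝ → EuclideanSpace ℝ (Fin d) → ℝ)
    (hG : G = fun t x => Real.exp
      (-(1 / 2) * ⟪x, mvE (A t) x⟫ + ⟪x, mvE (B t) y⟫ - 1 / 2 * ⟪y, mvE (C t) y⟫
        + ⟪θx t, x⟫ + ⟪θy t, y⟫ + ζ t)) :
    ∀ t ∈ I, ∀ x : EuclideanSpace ℝ (Fin d),
      -(deriv (fun s => G s x) t) + V x * G t x
        = ⟪mvE σ x, gradient (G t) x⟫ + κ / 2 * spatialLaplacian (G t) x := by
  intro t ht x
  subst hV
  have hAt := hAsymm t ht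
  obtain ⟨φ, hφ, rfl⟩ : ∃ φ : ℝ → EuclideanSpace ℝ (Fin d) → ℝ,
      (∀ s v, φ s v = -(1 / 2) * ⟪v, mvE (A s) v⟫ + ⟪v, mvE (B s) y⟫
        - 1 / 2 * ⟪y, mvE (C s) y⟫ + ⟪θx s, v⟫ + ⟪θy s, y⟫ + ζ s)
      ∧ G = fun s v => Real.exp (φ s v) := ⟨_, fun _ _ => rfl, hG⟩
  have hφ_quad : φ t = fun v => -(1 / 2) * ⟪v, mvE (A t) v⟫ + ⟪mvE (B t) y + θx t, v⟫
      + (-(1 / 2) * ⟪y, mvE (C t) y⟫ + ⟪θy t, y⟫ + ζ t) := by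
    funext v
    rw [hφ, inner_add_left, real_inner_comm v (mvE (B t) y)]
    ring
  have hφ_time := ((((((hasDerivAt_inner_mvE (hA t ht) x x).const_mul (-(1 / 2))).fun_add
    (hasDerivAt_inner_mvE (hB t ht) x y)).fun_sub
    ((hasDerivAt_inner_mvE (hC t ht) y y).const_mul (1 / 2))).fun_add
    ((hθx t ht).inner_const x)).fun_add ((hθy t ht).inner_const y)).fun_add (hζ t ht)
  refine exp_solves_backward_pde_of_hamiltonJacobi
    (hφ_quad ▸ contDiff_quadratic (Matrix.toEuclideanCLM (𝕜 := ℝ) (A t)) _ _)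
    (hφ_time.congr_of_eventuallyEq (.of_forall fun s => hφ s x)) ?_
  have hgrad : gradient (φ t) x = mvE (B t) y + θx t - mvE (A t) x := by
    rw [hφ_quad]
    exact (hasGradientAt_quadratic hAt.isSelfAdjoint_toEuclideanCLM _ _ x).gradient
  rw [hgrad, hφ_quad, spatialLaplacian_quadratic hAt]
  exact hamiltonJacobi_of_riccati κ σ (B t) hβ hAt ν x y (θx t)

/-- If the coefficient functions of the Gaussian ansatz satisfy the
backward coefficient ODE system, then the ansatz
`G(t,x) = exp(−½⟨x,Aₜx⟩ + ⟨x,Bₜy⟩ − ½⟨y,Cₜy⟩ + ⟨θxₜ,x⟩ + ⟨θyₜ,y⟩ + ζₜ)`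
solves the backward linear PDE `−∂ₜG + V·G = ⟨σx, ∇ₓG⟩ + (κ/2)·ΔₓG` on `I × ℝᵈ`,
where `V(x) = ½⟨x−ν, β(x−ν)⟩`. -/
theorem gaussian_ansatz_solves_backward_pde
    (d : ℕ) (hd : 1 ≤ d) (κ : ℝ) (hκ : 0 < κ)
    (β σ : Matrix (Fin d) (Fin d) ℝ) (hβ : β.IsSymm)
    (ν y : EuclideanSpace ℝ (Fin d))
    (I : Set ℝ) (hIopen : IsOpen I) (hIord : I.OrdConnected)
    (A B C : ℝ → Matrix (Fin d) (Fin d) ℝ)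
    (θx θy : ℝ → EuclideanSpace ℝ (Fin d))
    (ζ : ℝ → ℝ)
    (hAsymm : ∀ t ∈ I, (A t).IsSymm)
    (hA : ∀ t ∈ I, ∀ i j, HasDerivAt (fun s => A s i j)
      ((κ • (A t * A t) - (σ.transpose * A t + A t * σ) - β) i j) t)
    (hB : ∀ t ∈ I, ∀ i j, HasDerivAt (fun s => B s i j)
      ((κ • (A t * B t) - σ.transpose * B t) i j) t)
    (hC : ∀ t ∈ I, ∀ i j, HasDerivAt (fun s => C s i j)
      ((κ • ((B t).transpose * B t)) i j) t)
    (hθx : ∀ t ∈ I, HasDerivAt θx (mvE (κ • A t - σ.transpose) (θx t) - mvE β ν) t)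
    (hθy : ∀ t ∈ I, HasDerivAt θy (-(κ • mvE (B t).transpose (θx t))) t)
    (hζ : ∀ t ∈ I, HasDerivAt ζ
      (κ / 2 * (A t).trace + 1 / 2 * ⟪ν, mvE β ν⟫ - κ / 2 * ‖θx t‖ ^ 2) t)
    (V : EuclideanSpace ℝ (Fin d) → ℝ)
    (hV : V = fun x => 1 / 2 * ⟪x - ν, mvE β (x - ν)⟫)
    (G : ℝ → EuclideanSpace ℝ (Fin d) → ℝ)
    (hG : G = fun t x => Real.exp
      (-(1 / 2) * ⟪x, mvE (A t) x⟫ + ⟪x, mvE (B t) y⟫ - 1 / 2 * ⟪y, mvE (C t) y⟫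
        + ⟪θx t, x⟫ + ⟪θy t, y⟫ + ζ t)) :
    ∀ t ∈ I, ∀ x : EuclideanSpace ℝ (Fin d),
      -(deriv (fun s => G s x) t) + V x * G t x
        = ⟪mvE σ x, gradient (G t) x⟫ + κ / 2 * spatialLaplacian (G t) x :=
  gaussian_ansatz_solves_backward_pde_general d κ β σ hβ ν y I A B C θx θy ζ hAsymm hA hB hC hθx hθy
    hζ V hV G hG
end

section
/- Let σ, β, A₁ be real d×d matrices and κ ∈ ℝ. Let H be the 2d×2d block matrix with blocks H = [[σ, −κ·I],[−β, −σᵀ]], and for τ ∈ ℝ write exp(−τ·H) in block form with d×d blocks Φ₁₁(τ), Φ₁₂(τ), Φ₂₁(τ), Φ₂₂(τ). Define X(τ) = Φ₁₁(τ) + Φ₁₂(τ)·A₁ and Y(τ) = Φ₂₁(τ) + Φ₂₂(τ)·A₁. Then on any interval containing 0 on which X(τ) is invertible, the function A(τ) := Y(τ)·X(τ)⁻¹ is differentiable, satisfies A(0) = A₁, and solves the matrix Riccati equation A'(τ) = β + σᵀ·A(τ) + A(τ)·σ − κ·A(τ)·A(τ). -/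
/-!
`E(τ) = exp(-τH)` solves the linear equation `E' = -HE`, so its block column
`(X, Y) = (E₁₁ + E₁₂A₁, E₂₁ + E₂₂A₁)` solves `X' = -σX + κY`, `Y' = βX + σᵀY` with
`(X, Y)(0) = (I, A₁)`. Differentiating `A = YX⁻¹` by the product rule and the derivative
`-X⁻¹X'X⁻¹` of inversion turns any such linear system into a Riccati equation for `A`.
-/

open Matrix NormedSpace
open scoped Ring

section Riccati

variable {𝕜 R : Type*} [NontriviallyNormedField 𝕜] [NormedRing R] [HasSummableGeomSeries R]
  [NormedAlgebra 𝕜 R]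

theorem HasDerivAt.ringInverse {X : 𝕜 → R} {X' : R} {τ : 𝕜} (hX : HasDerivAt X X' τ)
    (hXτ : IsUnit (X τ)) :
    HasDerivAt (fun u => (X u)⁻¹ʳ) (-((X τ)⁻¹ʳ * X' * (X τ)⁻¹ʳ)) τ := by
  obtain ⟨x, hx⟩ := hXτ
  have h := (hx ▸ hasFDerivAt_ringInverse (𝕜 := 𝕜) x).comp_hasDerivAt τ hX
  rw [← hx]
  simpa [Function.comp_def] using h

theorem hasDerivAt_mul_ringInverse_of_linear {X Y : 𝕜 → R} {a b c e : R} {τ : 𝕜}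
    (hX : HasDerivAt X (a * X τ + b * Y τ) τ) (hY : HasDerivAt Y (c * X τ + e * Y τ) τ)
    (hXτ : IsUnit (X τ)) :
    HasDerivAt (fun u => Y u * (X u)⁻¹ʳ)
      (c + e * (Y τ * (X τ)⁻¹ʳ) - Y τ * (X τ)⁻¹ʳ * a -
        Y τ * (X τ)⁻¹ʳ * b * (Y τ * (X τ)⁻¹ʳ)) τ := by
  refine (hY.mul (hX.ringInverse hXτ)).congr_deriv ?_
  have hcancel := Ring.mul_inverse_cancel _ hXτ
  simp only [add_mul, mul_add, mul_neg, mul_assoc, hcancel, mul_one]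
  abel

end Riccati

section MatrixDerivative

variable {𝕜 : Type*} [NontriviallyNormedField 𝕜]

theorem Matrix.hasDerivAt_iff {m n : Type*} [Fintype m] [Fintype n] {f : 𝕜 → Matrix m n 𝕜}
    {f' : Matrix m n 𝕜} {τ : 𝕜} :
    HasDerivAt f f' τ ↔ ∀ i j, HasDerivAt (fun u => f u i j) (f' i j) τ :=
  hasDerivAt_pi.trans (forall_congr' fun _ => hasDerivAt_pi)

theorem HasDerivAt.matrix_toBlocks {l m n o : Type*} [Fintype l] [Fintype m] [Fintype n]
    [Fintype o] {f : 𝕜 → Matrix (l ⊕ m) (n ⊕ o) 𝕜} {f' : Matrix (l ⊕ m) (n ⊕ o) 𝕜} {τ : 𝕜}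
    (h : HasDerivAt f f' τ) :
    HasDerivAt (fun u => (f u).toBlocks₁₁) f'.toBlocks₁₁ τ ∧
      HasDerivAt (fun u => (f u).toBlocks₁₂) f'.toBlocks₁₂ τ ∧
      HasDerivAt (fun u => (f u).toBlocks₂₁) f'.toBlocks₂₁ τ ∧
      HasDerivAt (fun u => (f u).toBlocks₂₂) f'.toBlocks₂₂ τ := by
  refine ⟨?_, ?_, ?_, ?_⟩ <;>
    exact Matrix.hasDerivAt_iff.2 fun i j => Matrix.hasDerivAt_iff.1 h _ _

-- Any normed-algebra structure on matrices will do: `HasDerivAt` only sees the product topology.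
attribute [local instance] Matrix.linftyOpNormedAddCommGroup Matrix.linftyOpNormedSpace
  Matrix.linftyOpNormedRing Matrix.linftyOpNormedAlgebra

theorem hasDerivAt_toBlocks_mul_add {m : Type*} [Fintype m] [DecidableEq m]
    {E : 𝕜 → Matrix (m ⊕ m) (m ⊕ m) 𝕜} {P Q R S : Matrix m m 𝕜} {τ : 𝕜}
    (hE : HasDerivAt E (fromBlocks P Q R S * E τ) τ) (C : Matrix m m 𝕜) :
    HasDerivAt (fun u => (E u).toBlocks₁₁ + (E u).toBlocks₁₂ * C)
        (P * ((E τ).toBlocks₁₁ + (E τ).toBlocks₁₂ * C) +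
          Q * ((E τ).toBlocks₂₁ + (E τ).toBlocks₂₂ * C)) τ ∧
      HasDerivAt (fun u => (E u).toBlocks₂₁ + (E u).toBlocks₂₂ * C)
        (R * ((E τ).toBlocks₁₁ + (E τ).toBlocks₁₂ * C) +
          S * ((E τ).toBlocks₂₁ + (E τ).toBlocks₂₂ * C)) τ := by
  conv at hE => arg 2; rw [← fromBlocks_toBlocks (E τ), fromBlocks_multiply]
  obtain ⟨h₁₁, h₁₂, h₂₁, h₂₂⟩ := hE.matrix_toBlocks
  simp only [toBlocks_fromBlocks₁₁, toBlocks_fromBlocks₁₂, toBlocks_fromBlocks₂₁,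
    toBlocks_fromBlocks₂₂] at h₁₁ h₁₂ h₂₁ h₂₂
  constructor
  · refine (h₁₁.add (h₁₂.mul_const C)).congr_deriv ?_
    simp only [mul_add, add_mul, mul_assoc]
    abel
  · refine (h₂₁.add (h₂₂.mul_const C)).congr_deriv ?_
    simp only [mul_add, add_mul, mul_assoc]
    abel

theorem riccati_solution_from_block_matrix_exponential_general
    (d : ℕ) (σ β A₁ : Matrix (Fin d) (Fin d) ℝ) (κ : ℝ)
    (H : Matrix (Fin d ⊕ Fin d) (Fin d ⊕ Fin d) ℝ)
    (hH : H = Matrix.fromBlocks σ (-(κ • (1 : Matrix (Fin d) (Fin d) ℝ)))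
      (-β) (-σ.transpose))
    (Φ₁₁ Φ₁₂ Φ₂₁ Φ₂₂ : ℝ → Matrix (Fin d) (Fin d) ℝ)
    (hΦ₁₁ : ∀ τ : ℝ, Φ₁₁ τ = (NormedSpace.exp (-(τ • H))).toBlocks₁₁)
    (hΦ₁₂ : ∀ τ : ℝ, Φ₁₂ τ = (NormedSpace.exp (-(τ • H))).toBlocks₁₂)
    (hΦ₂₁ : ∀ τ : ℝ, Φ₂₁ τ = (NormedSpace.exp (-(τ • H))).toBlocks₂₁)
    (hΦ₂₂ : ∀ τ : ℝ, Φ₂₂ τ = (NormedSpace.exp (-(τ • H))).toBlocks₂₂)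
    (X Y : ℝ → Matrix (Fin d) (Fin d) ℝ)
    (hX : X = fun τ => Φ₁₁ τ + Φ₁₂ τ * A₁)
    (hY : Y = fun τ => Φ₂₁ τ + Φ₂₂ τ * A₁)
    (s : Set ℝ)
    (hinv : ∀ τ ∈ s, IsUnit (X τ))
    (A : ℝ → Matrix (Fin d) (Fin d) ℝ)
    (hA : A = fun τ => Y τ * (X τ)⁻¹) :
    A 0 = A₁ ∧
    ∀ τ ∈ s, ∀ i j, HasDerivAt (fun u => A u i j)
      ((β + σ.transpose * A τ + A τ * σ - κ • (A τ * A τ)) i j) τ := by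
  obtain rfl : Φ₁₁ = _ := funext hΦ₁₁
  obtain rfl : Φ₁₂ = _ := funext hΦ₁₂
  obtain rfl : Φ₂₁ = _ := funext hΦ₂₁
  obtain rfl : Φ₂₂ = _ := funext hΦ₂₂
  have hneg : -H = fromBlocks (-σ) (κ • 1) β σᵀ := by
    rw [hH, fromBlocks_neg, neg_neg, neg_neg, neg_neg]
  have hexp (τ : ℝ) : HasDerivAt (fun u : ℝ => exp (-(u • H))) (-H * exp (-(τ • H))) τ := by
    have h := hasDerivAt_exp_smul_const' (𝕂 := ℝ) (-H) τ
    simp only [smul_neg] at h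
    exact h
  have hXY (τ : ℝ) : HasDerivAt X (-σ * X τ + κ • 1 * Y τ) τ ∧
      HasDerivAt Y (β * X τ + σᵀ * Y τ) τ := by
    subst hX hY
    exact hasDerivAt_toBlocks_mul_add (hneg ▸ hexp τ) A₁
  subst hA
  constructor
  · subst hX hY
    simp [← fromBlocks_one]
  · intro τ hτ i j
    have hAd := hasDerivAt_mul_ringInverse_of_linear (hXY τ).1 (hXY τ).2 (hinv τ hτ)
    simp only [← nonsing_inv_eq_ringInverse] at hAd
    refine Matrix.hasDerivAt_iff.1 (hAd.congr_deriv ?_) i j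
    simp only [mul_neg, smul_mul_assoc, mul_smul_comm, mul_one, mul_assoc]
    abel

/-- Let `H = [[σ, −κI],[−β, −σᵀ]]` and let `Φᵢⱼ(τ)` be the `d×d`
blocks of `exp(−τH)`. With `X(τ) = Φ₁₁(τ) + Φ₁₂(τ)A₁` and `Y(τ) = Φ₂₁(τ) + Φ₂₂(τ)A₁`,
on any interval containing `0` on which `X(τ)` is invertible, `A(τ) := Y(τ)X(τ)⁻¹`
is differentiable, satisfies `A(0) = A₁`, and solves the matrix Riccati equation
`A'(τ) = β + σᵀA + Aσ − κA²`. -/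
theorem riccati_solution_from_block_matrix_exponential
    (d : ℕ) (σ β A₁ : Matrix (Fin d) (Fin d) ℝ) (κ : ℝ)
    (H : Matrix (Fin d ⊕ Fin d) (Fin d ⊕ Fin d) ℝ)
    (hH : H = Matrix.fromBlocks σ (-(κ • (1 : Matrix (Fin d) (Fin d) ℝ)))
      (-β) (-σ.transpose))
    (Φ₁₁ Φ₁₂ Φ₂₁ Φ₂₂ : ℝ → Matrix (Fin d) (Fin d) ℝ)
    (hΦ₁₁ : ∀ τ : ℝ, Φ₁₁ τ = (NormedSpace.exp (-(τ • H))).toBlocks₁₁)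
    (hΦ₁₂ : ∀ τ : ℝ, Φ₁₂ τ = (NormedSpace.exp (-(τ • H))).toBlocks₁₂)
    (hΦ₂₁ : ∀ τ : ℝ, Φ₂₁ τ = (NormedSpace.exp (-(τ • H))).toBlocks₂₁)
    (hΦ₂₂ : ∀ τ : ℝ, Φ₂₂ τ = (NormedSpace.exp (-(τ • H))).toBlocks₂₂)
    (X Y : ℝ → Matrix (Fin d) (Fin d) ℝ)
    (hX : X = fun τ => Φ₁₁ τ + Φ₁₂ τ * A₁)
    (hY : Y = fun τ => Φ₂₁ τ + Φ₂₂ τ * A₁)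
    (s : Set ℝ) (hs : s.OrdConnected) (h0 : (0 : ℝ) ∈ s)
    (hinv : ∀ τ ∈ s, IsUnit (X τ))
    (A : ℝ → Matrix (Fin d) (Fin d) ℝ)
    (hA : A = fun τ => Y τ * (X τ)⁻¹) :
    A 0 = A₁ ∧
    ∀ τ ∈ s, ∀ i j, HasDerivAt (fun u => A u i j)
      ((β + σ.transpose * A τ + A τ * σ - κ • (A τ * A τ)) i j) τ :=
  riccati_solution_from_block_matrix_exponential_general d σ β A₁ κ H hH Φ₁₁ Φ₁₂ Φ₂₁ Φ₂₂ hΦ₁₁ hΦ₁₂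
    hΦ₂₁ hΦ₂₂ X Y hX hY s hinv A hA

end MatrixDerivative
end

section
/- Let M be a real n×n matrix and N a real m×n matrix, and let 𝓜 be the (n+m)×(n+m) block matrix [[M, 0],[N, 0]]. Then for every τ ∈ ℝ, exp(τ·𝓜) equals the block matrix [[exp(τ·M), 0],[∫₀^τ N·exp(s·M) ds, I_m]], where the integral is the entrywise integral of the matrix-valued function s ↦ N·exp(s·M) and I_m is the m×m identity. -/
/-!
`Φ(t) = [[exp(tM), 0], [∫₀ᵗ N exp(sM) ds, I]]` solves `Φ' = 𝓜 Φ` (the lower-left block by the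
fundamental theorem of calculus) with `Φ(0) = I`, and any solution of this linear equation
satisfies `Φ(t) = exp(t𝓜) Φ(0)` because `exp(-t𝓜) Φ(t)` has zero derivative.
-/

open NormedSpace

theorem eq_exp_smul_mul_of_hasDerivAt {𝔸 : Type*} [NormedRing 𝔸] [NormedAlgebra ℝ 𝔸]
    [CompleteSpace 𝔸] {A : 𝔸} {Φ : ℝ → 𝔸} (hΦ : ∀ t, HasDerivAt Φ (A * Φ t) t) (t : ℝ) :
    Φ t = exp (t • A) * Φ 0 := by
  let : NormedAlgebra ℚ 𝔸 := NormedAlgebra.restrictScalars ℚ ℝ 𝔸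
  have hderiv : ∀ s, HasDerivAt (fun s => exp (s • -A) * Φ s) 0 s := fun s => by
    have h := (hasDerivAt_exp_smul_const (-A) s).mul (hΦ s)
    rwa [mul_neg, neg_mul, mul_assoc, neg_add_cancel] at h
  have hconst : exp (t • -A) * Φ t = Φ 0 := by
    simpa using is_const_of_deriv_eq_zero (fun s => (hderiv s).differentiableAt)
      (fun s => (hderiv s).deriv) t 0
  rw [← hconst, ← mul_assoc, smul_neg, ← exp_add_of_commute (Commute.refl (t • A)).neg_right,
    add_neg_cancel, exp_zero, one_mul]

section MatrixCalculus

open scoped Matrix.Norms.Operator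

variable {l m n o : Type*} [Fintype l] [Fintype m] [Fintype n] [Fintype o]

theorem Matrix.intervalIntegral_apply {f : ℝ → Matrix m n ℝ} (hf : Continuous f) (a b : ℝ)
    (i : m) (j : n) :
    (∫ s in a..b, f s) i j = ∫ s in a..b, f s i j :=
  ((Matrix.entryLinearMap ℝ ℝ i j).toContinuousLinearMap.intervalIntegral_comp_comm
    (hf.intervalIntegrable a b)).symm

section

variable {𝕜 : Type*} [NontriviallyNormedField 𝕜] [CompleteSpace 𝕜]

noncomputable def Matrix.fromBlocksCLM :
    (Matrix n l 𝕜 × Matrix n m 𝕜) × (Matrix o l 𝕜 × Matrix o m 𝕜)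
      →L[𝕜] Matrix (n ⊕ o) (l ⊕ m) 𝕜 :=
  LinearMap.toContinuousLinearMap
    { toFun := fun p => Matrix.fromBlocks p.1.1 p.1.2 p.2.1 p.2.2
      map_add' := fun p q => by simp [Matrix.fromBlocks_add]
      map_smul' := fun c p => by simp [Matrix.fromBlocks_smul] }

theorem HasDerivAt.matrix_fromBlocks {A : 𝕜 → Matrix n l 𝕜} {B : 𝕜 → Matrix n m 𝕜}
    {C : 𝕜 → Matrix o l 𝕜} {D : 𝕜 → Matrix o m 𝕜} {A' B' C' D'} {t : 𝕜}
    (hA : HasDerivAt A A' t) (hB : HasDerivAt B B' t) (hC : HasDerivAt C C' t)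
    (hD : HasDerivAt D D' t) :
    HasDerivAt (fun t => Matrix.fromBlocks (A t) (B t) (C t) (D t))
      (Matrix.fromBlocks A' B' C' D') t :=
  (Matrix.fromBlocksCLM.hasFDerivAt.comp_hasDerivAt t ((hA.prodMk hB).prodMk (hC.prodMk hD)) :)

end

variable [DecidableEq n] [DecidableEq m]

theorem Matrix.exp_smul_fromBlocks_zero_right (M : Matrix n n ℝ) (N : Matrix m n ℝ) (τ : ℝ) :
    exp (τ • Matrix.fromBlocks M 0 N 0)
      = Matrix.fromBlocks (exp (τ • M)) 0
          (Matrix.of fun i j => ∫ s in (0 : ℝ)..τ, (N * exp (s • M)) i j) (1 : Matrix m m ℝ) := by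
  have hint : Continuous fun s : ℝ => N * exp (s • M) := by fun_prop
  have hentries : (Matrix.of fun i j => ∫ s in (0 : ℝ)..τ, (N * exp (s • M)) i j)
      = ∫ s in (0 : ℝ)..τ, N * exp (s • M) := by
    ext i j
    exact (Matrix.intervalIntegral_apply hint 0 τ i j).symm
  let Φ : ℝ → Matrix (n ⊕ m) (n ⊕ m) ℝ := fun t =>
    Matrix.fromBlocks (exp (t • M)) 0 (∫ s in (0 : ℝ)..t, N * exp (s • M)) 1
  have hΦ : ∀ t, HasDerivAt Φ (Matrix.fromBlocks M 0 N 0 * Φ t) t := by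
    intro t
    have hblocks : Matrix.fromBlocks M 0 N 0 * Φ t
        = Matrix.fromBlocks (M * exp (t • M)) 0 (N * exp (t • M)) 0 := by
      simp [Φ, Matrix.fromBlocks_multiply]
    rw [hblocks]
    exact (hasDerivAt_exp_smul_const' M t).matrix_fromBlocks (hasDerivAt_const t 0)
      (hint.integral_hasStrictDerivAt 0 t).hasDerivAt (hasDerivAt_const t 1)
  have hΦ0 : Φ 0 = 1 := by simp [Φ, Matrix.fromBlocks_one]
  have hexp := eq_exp_smul_mul_of_hasDerivAt hΦ τ
  rw [hΦ0, mul_one] at hexp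
  rw [hentries]
  exact hexp.symm

end MatrixCalculus

/-- For `𝓜 = [[M, 0],[N, 0]]` (with `M` an `n×n` matrix and `N` an
`m×n` matrix), the matrix exponential is
`exp(τ𝓜) = [[exp(τM), 0],[∫₀^τ N·exp(sM) ds, I]]`, where the integral is entrywise. -/
theorem block_exponential_with_integral_block
    (n m : ℕ) (M : Matrix (Fin n) (Fin n) ℝ) (N : Matrix (Fin m) (Fin n) ℝ)
    (𝓜 : Matrix (Fin n ⊕ Fin m) (Fin n ⊕ Fin m) ℝ)
    (h𝓜 : 𝓜 = Matrix.fromBlocks M 0 N 0) :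
    ∀ τ : ℝ,
      NormedSpace.exp (τ • 𝓜)
        = Matrix.fromBlocks (NormedSpace.exp (τ • M)) 0
            (Matrix.of fun i j => ∫ s in (0:ℝ)..τ, (N * NormedSpace.exp (s • M)) i j)
            (1 : Matrix (Fin m) (Fin m) ℝ) := by
  subst h𝓜
  exact Matrix.exp_smul_fromBlocks_zero_right M N
end

section
/- Let β be a real symmetric positive definite d×d matrix and κ > 0, and let W be the (unique) symmetric positive definite square root of κ·β. Then for every τ > 0 the matrix exp(τ·W) − exp(−τ·W) is invertible, and the matrix-valued function A(τ) := (1/κ)·W·(exp(τ·W) + exp(−τ·W))·(exp(τ·W) − exp(−τ·W))⁻¹ (the matrix version of (1/κ)·W·coth(τW)) is differentiable on (0,∞) and satisfies the matrix Riccati equation A'(τ) = β − κ·A(τ)·A(τ). -/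
/-!
Write `C(τ) = exp(τW) + exp(-τW)` and `S(τ) = exp(τW) - exp(-τW)`, so that `C' = W S` and
`S' = W C`. Differentiating `X = W C S⁻¹` with `(S⁻¹)' = -S⁻¹ S' S⁻¹` gives `X' = W² - X²`, with
no commutativity needed; as `A = X / κ` and `W² = κ β`, this is the Riccati equation.
`S(τ)` is invertible because, by the functional calculus, its spectrum consists of the numbers
`e^{τλ} - e^{-τλ}` for the eigenvalues `λ > 0` of `W`.
-/

open NormedSpace

section Inverse

variable {𝕜 R : Type*} [NontriviallyNormedField 𝕜] [NormedRing R] [NormedAlgebra 𝕜 R]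
  [HasSummableGeomSeries R]

theorem HasDerivAt.ringInverse_s12 {S : 𝕜 → R} {S' : R} {τ : 𝕜} (hS : HasDerivAt S S' τ)
    (hunit : IsUnit (S τ)) :
    HasDerivAt (fun u => Ring.inverse (S u))
      (-(Ring.inverse (S τ) * S' * Ring.inverse (S τ))) τ := by
  obtain ⟨s, hs⟩ := hunit
  have hinv := hasFDerivAt_ringInverse (𝕜 := 𝕜) s
  rw [hs] at hinv
  exact (hinv.comp_hasDerivAt τ hS).congr_deriv (by simp [← hs])

theorem hasDerivAt_mul_mul_ringInverse {a : R} {C S : 𝕜 → R} {τ : 𝕜}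
    (hC : HasDerivAt C (a * S τ) τ) (hS : HasDerivAt S (a * C τ) τ) (hunit : IsUnit (S τ)) :
    HasDerivAt (fun u => a * C u * Ring.inverse (S u))
      (a * a - a * C τ * Ring.inverse (S τ) * (a * C τ * Ring.inverse (S τ))) τ := by
  refine ((hC.const_mul a).mul (hS.ringInverse_s12 hunit)).congr_deriv ?_
  rw [← mul_assoc a a, mul_assoc (a * a), Ring.mul_inverse_cancel _ hunit]
  noncomm_ring

end Inverse

section Exponential

variable {𝕂 R : Type*} [RCLike 𝕂] [NormedRing R] [NormedAlgebra 𝕂 R] [CompleteSpace R]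

theorem hasDerivAt_exp_neg_smul_const (a : R) (τ : 𝕂) :
    HasDerivAt (fun u : 𝕂 => exp (-(u • a))) (-(a * exp (-(τ • a)))) τ := by
  simpa only [smul_neg, neg_mul] using hasDerivAt_exp_smul_const' (-a) τ

theorem hasDerivAt_mul_exp_add_mul_ringInverse_exp_sub (a : R) {τ : 𝕂}
    (hunit : IsUnit (exp (τ • a) - exp (-(τ • a)))) :
    HasDerivAt (fun u => a * (exp (u • a) + exp (-(u • a))) *
        Ring.inverse (exp (u • a) - exp (-(u • a))))
      (a * a - a * (exp (τ • a) + exp (-(τ • a))) * Ring.inverse (exp (τ • a) - exp (-(τ • a))) *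
        (a * (exp (τ • a) + exp (-(τ • a))) * Ring.inverse (exp (τ • a) - exp (-(τ • a))))) τ := by
  refine hasDerivAt_mul_mul_ringInverse ?_ ?_ hunit
  · exact ((hasDerivAt_exp_smul_const' a τ).add (hasDerivAt_exp_neg_smul_const a τ)).congr_deriv
      (by rw [mul_sub, sub_eq_add_neg])
  · exact ((hasDerivAt_exp_smul_const' a τ).sub (hasDerivAt_exp_neg_smul_const a τ)).congr_deriv
      (by rw [mul_add, sub_neg_eq_add])

end Exponential

theorem IsSelfAdjoint.isUnit_exp_smul_sub_exp_neg_smul {A : Type*} [NormedRing A] [StarRing A]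
    [NormedAlgebra ℝ A] [StarModule ℝ A] [hcfc : ContinuousFunctionalCalculus ℝ A IsSelfAdjoint]
    {a : A} (ha : IsSelfAdjoint a) (ha₀ : IsUnit a) {τ : ℝ} (hτ : τ ≠ 0) :
    IsUnit (NormedSpace.exp (τ • a) - NormedSpace.exp (-(τ • a))) := by
  have hsinh : NormedSpace.exp (τ • a) - NormedSpace.exp (-(τ • a)) =
      cfc (fun x => Real.exp (τ * x) - Real.exp (-τ * x)) a := by
    rw [cfc_sub _ _ a, cfc_comp_const_mul _ _ a, cfc_comp_const_mul _ _ a,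
      CFC.real_exp_eq_normedSpace_exp ((IsSelfAdjoint.all τ).smul ha),
      CFC.real_exp_eq_normedSpace_exp ((IsSelfAdjoint.all _).smul ha), neg_smul]
  rw [hsinh, isUnit_cfc_iff _ a]
  intro x hx hzero
  have hx₀ : x ≠ 0 := fun hx0 => (spectrum.zero_notMem_iff ℝ).mpr ha₀ (hx0 ▸ hx)
  rw [sub_eq_zero, Real.exp_eq_exp] at hzero
  exact mul_ne_zero hτ hx₀ (by linarith)

section Matrix

attribute [local instance] Matrix.linftyOpNormedRing Matrix.linftyOpNormedAlgebra

theorem Matrix.PosDef.isUnit_exp_smul_sub_exp_neg_smul {n : Type*} [Fintype n] [DecidableEq n]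
    {W : Matrix n n ℝ} (hW : W.PosDef) {τ : ℝ} (hτ : τ ≠ 0) :
    IsUnit (exp (τ • W) - exp (-(τ • W))) :=
  -- Instance search does not see through `linftyOpNormedRing` to the ring structure of `Matrix`.
  IsSelfAdjoint.isUnit_exp_smul_sub_exp_neg_smul
    (hcfc := IsHermitian.instContinuousFunctionalCalculus) hW.1 hW.isUnit hτ

theorem matrix_coth_solves_riccati_general
    (d : ℕ) (β : Matrix (Fin d) (Fin d) ℝ) (κ : ℝ) (hκ : 0 < κ)
    (W : Matrix (Fin d) (Fin d) ℝ) (hWpd : W.PosDef) (hWsq : W * W = κ • β)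
    (A : ℝ → Matrix (Fin d) (Fin d) ℝ)
    (hA : A = fun τ => (1 / κ) •
      (W * (NormedSpace.exp (τ • W) + NormedSpace.exp (-(τ • W)))
        * (NormedSpace.exp (τ • W) - NormedSpace.exp (-(τ • W)))⁻¹)) :
    (∀ τ > (0:ℝ), IsUnit (NormedSpace.exp (τ • W) - NormedSpace.exp (-(τ • W)))) ∧
    ∀ τ > (0:ℝ), ∀ i j, HasDerivAt (fun u => A u i j)
      ((β - κ • (A τ * A τ)) i j) τ := by
  have hsinh : ∀ τ > (0:ℝ), IsUnit (exp (τ • W) - exp (-(τ • W))) := fun τ hτ =>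
    hWpd.isUnit_exp_smul_sub_exp_neg_smul hτ.ne'
  refine ⟨hsinh, fun τ hτ i j => ?_⟩
  have hriccati : ∀ X, (1 / κ) • (W * W - X * X) = β - κ • ((1 / κ) • X * ((1 / κ) • X)) := by
    intro X
    rw [hWsq, smul_mul_smul_comm, smul_smul]
    match_scalars <;> field_simp
  subst hA
  simp only [Matrix.nonsing_inv_eq_ringInverse]
  have hX := ((hasDerivAt_mul_exp_add_mul_ringInverse_exp_sub W (hsinh τ hτ)).const_smul
    (1 / κ)).congr_deriv (hriccati _)
  exact (Matrix.entryLinearMap ℝ ℝ i j).toContinuousLinearMap.hasFDerivAt.comp_hasDerivAt τ hX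

/-- Let `β` be symmetric positive definite, `κ > 0`, and `W` the
symmetric positive definite square root of `κ·β`. Then for every `τ > 0` the matrix
`exp(τW) − exp(−τW)` is invertible, and
`A(τ) := (1/κ)·W·(exp(τW) + exp(−τW))·(exp(τW) − exp(−τW))⁻¹` (the matrix version of
`(1/κ)·W·coth(τW)`) is differentiable on `(0,∞)` and satisfies the matrix Riccati
equation `A'(τ) = β − κ·A(τ)·A(τ)`. -/
theorem matrix_coth_solves_riccati
    (d : ℕ) (β : Matrix (Fin d) (Fin d) ℝ) (hβ : β.PosDef)
    (κ : ℝ) (hκ : 0 < κ)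
    (W : Matrix (Fin d) (Fin d) ℝ) (hWpd : W.PosDef) (hWsq : W * W = κ • β)
    (A : ℝ → Matrix (Fin d) (Fin d) ℝ)
    (hA : A = fun τ => (1 / κ) •
      (W * (NormedSpace.exp (τ • W) + NormedSpace.exp (-(τ • W)))
        * (NormedSpace.exp (τ • W) - NormedSpace.exp (-(τ • W)))⁻¹)) :
    (∀ τ > (0:ℝ), IsUnit (NormedSpace.exp (τ • W) - NormedSpace.exp (-(τ • W)))) ∧
    ∀ τ > (0:ℝ), ∀ i j, HasDerivAt (fun u => A u i j)
      ((β - κ • (A τ * A τ)) i j) τ :=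
  matrix_coth_solves_riccati_general d β κ hκ W hWpd hWsq A hA

end Matrix
end

section
/- Let d ≥ 1, κ > 0, let V : ℝ^d → ℝ, let f : ℝ^d → ℝ^d be continuously differentiable, and let ψ, φ : ℝ × ℝ^d → ℝ be continuously differentiable in time and twice continuously differentiable in space, with ψ everywhere positive. Suppose that at every point: −∂_t ψ + V·ψ = ⟨f, ∇ψ⟩ + (κ/2)·Δψ (ψ solves the backward linearized HJB equation) and ∂_t φ + V·φ = −∇·(f·φ) + (κ/2)·Δφ (φ solves the adjoint forward equation). Then the product q := φ·ψ satisfies the controlled Kolmogorov–Fokker–Planck equation ∂_t q = −∇·((f + κ·∇ log ψ)·q) + (κ/2)·Δq at every point; in particular the potential terms V·φ·ψ cancel in the product. -/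
/-!
Fix `t` and write `a = φ(t, ·)`, `b = ψ(t, ·)`. Since `b ∇log b = ∇b`, the controlled flux is
`ab (f + κ ∇log b) = b (a f) + κ a ∇b`; the product rules `div (c w) = c div w + ⟨∇c, w⟫` and
`Δ(ab) = aΔb + bΔa + 2⟨∇a, ∇b⟫` expand its divergence and `Δ(ab)`. The claim is then
`ψ · (forward equation) − φ · (backward equation)`, in which the potential terms `Vφψ` cancel.
-/

open scoped RealInnerProductSpace

/-- Divergence of a vector field on Euclidean space: sum of the `i`-th components of
the derivatives in the `i`-th coordinate directions. -/
noncomputable def spatialDiv {d : ℕ}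
    (w : EuclideanSpace ℝ (Fin d) → EuclideanSpace ℝ (Fin d))
    (x : EuclideanSpace ℝ (Fin d)) : ℝ :=
  ∑ i, fderiv ℝ w x (EuclideanSpace.single i 1) i

open InnerProductSpace

section

variable {F : Type*} [NormedAddCommGroup F] [InnerProductSpace ℝ F] [CompleteSpace F]

theorem gradient_mul {a b : F → ℝ} {x : F} (ha : DifferentiableAt ℝ a x)
    (hb : DifferentiableAt ℝ b x) :
    gradient (fun y => a y * b y) x = a x • gradient b x + b x • gradient a x := by
  apply (toDual ℝ F).injective
  simp [toDual_gradient, fderiv_fun_mul ha hb]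

theorem gradient_log {b : F → ℝ} {x : F} (hb : DifferentiableAt ℝ b x) (hbx : b x ≠ 0) :
    gradient (fun y => Real.log (b y)) x = (b x)⁻¹ • gradient b x := by
  apply (toDual ℝ F).injective
  simpa [toDual_gradient] using (hb.hasFDerivAt.log hbx).fderiv

theorem differentiable_gradient {g : F → ℝ} (hg : ContDiff ℝ 2 g) :
    Differentiable ℝ (gradient g) :=
  (toDual ℝ F).symm.toContinuousLinearEquiv.differentiable.comp
    ((hg.fderiv_right (by norm_num)).differentiable one_ne_zero)

end

section

variable {d : ℕ}

local notation "E" => EuclideanSpace ℝ (Fin d)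

theorem gradient_apply_single (g : E → ℝ) (x : E) (i : Fin d) :
    gradient g x i = fderiv ℝ g x (EuclideanSpace.single i 1) := by
  rw [← inner_gradient_left, EuclideanSpace.inner_single_right]
  simp

theorem fderiv_euclideanSpace_apply {u : E → E} {x : E} (hu : DifferentiableAt ℝ u x)
    (i : Fin d) (v : E) : fderiv ℝ (fun y => u y i) x v = fderiv ℝ u x v i := by
  rw [show (fun y => u y i) = (fun w : E => w i) ∘ u from rfl,
    ((PiLp.hasFDerivAt_apply (𝕜 := ℝ) 2 (u x) i).comp x hu.hasFDerivAt).fderiv]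
  rfl

theorem spatialDiv_add {u v : E → E} {x : E} (hu : DifferentiableAt ℝ u x)
    (hv : DifferentiableAt ℝ v x) :
    spatialDiv (fun y => u y + v y) x = spatialDiv u x + spatialDiv v x := by
  simp [spatialDiv, fderiv_fun_add hu hv, Finset.sum_add_distrib]

theorem spatialDiv_const_smul (c : ℝ) (w : E → E) (x : E) :
    spatialDiv (fun y => c • w y) x = c * spatialDiv w x := by
  simp [spatialDiv, ← Pi.smul_def, fderiv_const_smul_field, Finset.mul_sum]

theorem spatialDiv_smul {c : E → ℝ} {w : E → E} {x : E} (hc : DifferentiableAt ℝ c x)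
    (hw : DifferentiableAt ℝ w x) :
    spatialDiv (fun y => c y • w y) x = c x * spatialDiv w x + ⟪gradient c x, w x⟫ := by
  simp only [spatialDiv, fderiv_fun_smul hc hw, PiLp.inner_apply, gradient_apply_single]
  simp [Finset.sum_add_distrib, Finset.mul_sum, mul_comm]

theorem spatialDiv_gradient {g : E → ℝ} (hg : ContDiff ℝ 2 g) (x : E) :
    spatialDiv (gradient g) x = spatialLaplacian g x := by
  refine Finset.sum_congr rfl fun i _ => ?_
  simp only [← fderiv_euclideanSpace_apply (differentiable_gradient hg x), gradient_apply_single]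

theorem spatialLaplacian_mul {a b : E → ℝ} (ha : ContDiff ℝ 2 a) (hb : ContDiff ℝ 2 b) (x : E) :
    spatialLaplacian (fun y => a y * b y) x
      = a x * spatialLaplacian b x + b x * spatialLaplacian a x
        + 2 * ⟪gradient a x, gradient b x⟫ := by
  have hda := ha.differentiable two_ne_zero
  have hdb := hb.differentiable two_ne_zero
  rw [← spatialDiv_gradient (ha.mul hb), show gradient (fun y => a y * b y)
      = fun y => a y • gradient b y + b y • gradient a y from
      funext fun y => gradient_mul (hda y) (hdb y),
    spatialDiv_add ((hda x).fun_smul (differentiable_gradient hb x))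
      ((hdb x).fun_smul (differentiable_gradient ha x)),
    spatialDiv_smul (hda x) (differentiable_gradient hb x),
    spatialDiv_smul (hdb x) (differentiable_gradient ha x),
    spatialDiv_gradient ha, spatialDiv_gradient hb, real_inner_comm (gradient a x)]
  ring

theorem spatialDiv_mul_smul_add_smul_gradient_log {a b : E → ℝ} {w : E → E} {x : E} (κ : ℝ)
    (ha : DifferentiableAt ℝ a x) (hb : ContDiff ℝ 2 b) (hw : DifferentiableAt ℝ w x)
    (hb0 : ∀ y, b y ≠ 0) :
    spatialDiv (fun y => (a y * b y) • (w y + κ • gradient (fun y' => Real.log (b y')) y)) x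
      = b x * spatialDiv (fun y => a y • w y) x + a x * ⟪w x, gradient b x⟫
        + κ * (a x * spatialLaplacian b x + ⟪gradient a x, gradient b x⟫) := by
  have hdb := hb.differentiable two_ne_zero
  have hflux : (fun y => (a y * b y) • (w y + κ • gradient (fun y' => Real.log (b y')) y))
      = fun y => b y • (a y • w y) + κ • (a y • gradient b y) := by
    funext y
    rw [gradient_log (hdb y) (hb0 y)]
    match_scalars <;> field_simp [hb0 y]
  rw [hflux, spatialDiv_add ((hdb x).fun_smul (ha.fun_smul hw))
      ((ha.fun_smul (differentiable_gradient hb x)).fun_const_smul κ),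
    spatialDiv_smul (hdb x) (ha.fun_smul hw), spatialDiv_const_smul,
    spatialDiv_smul ha (differentiable_gradient hb x), spatialDiv_gradient hb, inner_smul_right,
    real_inner_comm (w x)]

end

theorem product_of_backward_and_forward_solves_fpk_general
    (d : ℕ) (κ : ℝ)
    (V : EuclideanSpace ℝ (Fin d) → ℝ)
    (f : EuclideanSpace ℝ (Fin d) → EuclideanSpace ℝ (Fin d))
    (hf : ContDiff ℝ 1 f)
    (ψ φ : ℝ × EuclideanSpace ℝ (Fin d) → ℝ)
    -- ψ, φ continuously differentiable in time:
    (hψt : ∀ x, ContDiff ℝ 1 (fun t => ψ (t, x)))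
    (hφt : ∀ x, ContDiff ℝ 1 (fun t => φ (t, x)))
    -- ψ, φ twice continuously differentiable in space:
    (hψx : ∀ t, ContDiff ℝ 2 (fun x => ψ (t, x)))
    (hφx : ∀ t, ContDiff ℝ 2 (fun x => φ (t, x)))
    (hψpos : ∀ p, 0 < ψ p)
    -- ψ solves the backward linearized HJB equation:
    (hψpde : ∀ t x,
      -(deriv (fun s => ψ (s, x)) t) + V x * ψ (t, x)
        = ⟪f x, gradient (fun y => ψ (t, y)) x⟫
          + κ / 2 * spatialLaplacian (fun y => ψ (t, y)) x)
    -- φ solves the adjoint forward equation: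
    (hφpde : ∀ t x,
      deriv (fun s => φ (s, x)) t + V x * φ (t, x)
        = -(spatialDiv (fun y => φ (t, y) • f y) x)
          + κ / 2 * spatialLaplacian (fun y => φ (t, y)) x)
    (q : ℝ × EuclideanSpace ℝ (Fin d) → ℝ)
    (hq : q = fun p => φ p * ψ p) :
    ∀ t x,
      deriv (fun s => q (s, x)) t
        = -(spatialDiv (fun y => q (t, y) •
              (f y + κ • gradient (fun y' => Real.log (ψ (t, y'))) y)) x)
          + κ / 2 * spatialLaplacian (fun y => q (t, y)) x := by
  intro t x
  subst hq
  beta_reduce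
  rw [deriv_fun_mul ((hφt x).differentiable one_ne_zero t) ((hψt x).differentiable one_ne_zero t),
    spatialDiv_mul_smul_add_smul_gradient_log κ ((hφx t).differentiable two_ne_zero x) (hψx t)
      (hf.differentiable one_ne_zero x) fun y => (hψpos (t, y)).ne',
    spatialLaplacian_mul (hφx t) (hψx t)]
  linear_combination ψ (t, x) * hφpde t x - φ (t, x) * hψpde t x

/-- If `ψ > 0` solves the backward linearized HJB equation
`−∂ₜψ + Vψ = ⟨f, ∇ψ⟩ + (κ/2)Δψ` and `φ` solves the adjoint forward equation
`∂ₜφ + Vφ = −∇·(fφ) + (κ/2)Δφ`, then the product `q := φψ` satisfies the controlled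
Kolmogorov–Fokker–Planck equation `∂ₜq = −∇·((f + κ∇log ψ)q) + (κ/2)Δq` at every
point (the potential terms `Vφψ` cancel in the product). -/
theorem product_of_backward_and_forward_solves_fpk
    (d : ℕ) (hd : 1 ≤ d) (κ : ℝ) (hκ : 0 < κ)
    (V : EuclideanSpace ℝ (Fin d) → ℝ)
    (f : EuclideanSpace ℝ (Fin d) → EuclideanSpace ℝ (Fin d))
    (hf : ContDiff ℝ 1 f)
    (ψ φ : ℝ × EuclideanSpace ℝ (Fin d) → ℝ)
    -- ψ, φ continuously differentiable in time:
    (hψt : ∀ x, ContDiff ℝ 1 (fun t => ψ (t, x)))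
    (hφt : ∀ x, ContDiff ℝ 1 (fun t => φ (t, x)))
    -- ψ, φ twice continuously differentiable in space:
    (hψx : ∀ t, ContDiff ℝ 2 (fun x => ψ (t, x)))
    (hφx : ∀ t, ContDiff ℝ 2 (fun x => φ (t, x)))
    (hψpos : ∀ p, 0 < ψ p)
    -- ψ solves the backward linearized HJB equation:
    (hψpde : ∀ t x,
      -(deriv (fun s => ψ (s, x)) t) + V x * ψ (t, x)
        = ⟪f x, gradient (fun y => ψ (t, y)) x⟫
          + κ / 2 * spatialLaplacian (fun y => ψ (t, y)) x)
    -- φ solves the adjoint forward equation: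
    (hφpde : ∀ t x,
      deriv (fun s => φ (s, x)) t + V x * φ (t, x)
        = -(spatialDiv (fun y => φ (t, y) • f y) x)
          + κ / 2 * spatialLaplacian (fun y => φ (t, y)) x)
    (q : ℝ × EuclideanSpace ℝ (Fin d) → ℝ)
    (hq : q = fun p => φ p * ψ p) :
    ∀ t x,
      deriv (fun s => q (s, x)) t
        = -(spatialDiv (fun y => q (t, y) •
              (f y + κ • gradient (fun y' => Real.log (ψ (t, y'))) y)) x)
          + κ / 2 * spatialLaplacian (fun y => q (t, y)) x :=
  product_of_backward_and_forward_solves_fpk_general d κ V f hf ψ φ hψt hφt hψx hφx hψpos hψpde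
    hφpde q hq
end
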